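/- arXiv:2405.18333 — 3 statements merged into one kernel-verified Lean document; each statement's English description precedes it below -/
import Mathlib

section
/- Let B ∈ ℝ^{[3,n]} and A ∈ ℝ^{n×n} be generalized row strictly diagonally dominant with all positive diagonal entries, and let q ∈ ℝ^n \ ℝ^n_+. If x ∈ ℝ^n solves the quadratic complementarity problem (x ≥ 0, Bx² + Ax + q ≥ 0, xᵀ(Bx² + Ax + q) = 0) and ‖x‖_∞ = x_k for some index k, then q_k < 0 and (Bx² + Ax)_k + q_k = 0. -/
/-!
At a maximal component `x k = ‖x‖_∞`, every off-diagonal product `x j * x l` or `x j` is bounded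
by `x k ^ 2` resp. `x k`, so negative off-diagonal entries cost at most `r_k(·)_- * x k ^ 2`
resp. `r_k(·)_- * x k`. Diagonal dominance therefore makes `(Bx² + Ax)_k` positive as soon as
`x k > 0`, which holds because `x = 0` is not feasible when `q` has a negative component.
Complementarity then forces `(Bx² + Ax + q)_k = 0`, i.e. `q k = -(Bx² + Ax)_k < 0`.
-/

/-- sum of absolute values of negative off-diagonal entries in row `i` of a
third order tensor. -/
noncomputable def rMinus3 {n : ℕ} (B : Fin n → Fin n → Fin n → ℝ) (i : Fin n) : ℝ :=
  ∑ j, ∑ l, if (j, l) ≠ (i, i) ∧ B i j l < 0 then |B i j l| else 0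

/-- sum of absolute values of negative off-diagonal entries in row `i` of a matrix. -/
noncomputable def rMinus2 {n : ℕ} (A : Fin n → Fin n → ℝ) (i : Fin n) : ℝ :=
  ∑ j, if j ≠ i ∧ A i j < 0 then |A i j| else 0

lemma neg_mul_le_mul_of_le {a y c : ℝ} (hy : 0 ≤ y) (hyc : y ≤ c) :
    -((if a < 0 then |a| else 0) * c) ≤ a * y := by
  split_ifs with ha
  · rw [abs_of_neg ha]
    nlinarith
  · nlinarith

lemma eq_zero_of_sum_mul_eq_zero {ι : Type*} [Fintype ι] {x w : ι → ℝ}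
    (hx : ∀ i, 0 ≤ x i) (hw : ∀ i, 0 ≤ w i) (h : ∑ i, x i * w i = 0)
    {k : ι} (hk : 0 < x k) : w k = 0 := by
  have hterm := (Finset.sum_eq_zero_iff_of_nonneg fun i _ => mul_nonneg (hx i) (hw i)).mp h k
    (Finset.mem_univ k)
  exact (mul_eq_zero.mp hterm).resolve_left hk.ne'

section MaxComponent

variable {n : ℕ} {x : Fin n → ℝ} {k : Fin n}

lemma sub_rMinus2_mul_le_sum_mul (A : Fin n → Fin n → ℝ)
    (hx0 : ∀ i, 0 ≤ x i) (hk : ∀ i, x i ≤ x k) :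
    (A k k - rMinus2 A k) * x k ≤ ∑ j, A k j * x j := by
  have hterm : ∀ j, (if j = k then A k k * x k else 0)
      - (if j ≠ k ∧ A k j < 0 then |A k j| else 0) * x k ≤ A k j * x j := by
    intro j
    by_cases hj : j = k
    · subst hj
      simp
    · simpa [hj, sub_eq_add_neg] using neg_mul_le_mul_of_le (a := A k j) (hx0 j) (hk j)
  calc (A k k - rMinus2 A k) * x k
      = ∑ j, ((if j = k then A k k * x k else 0)
          - (if j ≠ k ∧ A k j < 0 then |A k j| else 0) * x k) := by
        rw [Finset.sum_sub_distrib, Finset.sum_ite_eq', ← Finset.sum_mul, rMinus2]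
        simp [sub_mul]
    _ ≤ ∑ j, A k j * x j := Finset.sum_le_sum fun j _ => hterm j

lemma sub_rMinus3_mul_le_sum_mul (B : Fin n → Fin n → Fin n → ℝ)
    (hx0 : ∀ i, 0 ≤ x i) (hk : ∀ i, x i ≤ x k) :
    (B k k k - rMinus3 B k) * (x k * x k) ≤ ∑ j, ∑ l, B k j l * x j * x l := by
  have hterm : ∀ j l, (if (j, l) = (k, k) then B k k k * (x k * x k) else 0)
      - (if (j, l) ≠ (k, k) ∧ B k j l < 0 then |B k j l| else 0) * (x k * x k)
        ≤ B k j l * x j * x l := by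
    intro j l
    by_cases hjl : (j, l) = (k, k)
    · obtain ⟨rfl, rfl⟩ : j = k ∧ l = k := Prod.mk.inj hjl
      simp [mul_assoc]
    · have hprod : x j * x l ≤ x k * x k :=
        mul_le_mul (hk j) (hk l) (hx0 l) ((hx0 j).trans (hk j))
      simpa [hjl, sub_eq_add_neg, mul_assoc] using
        neg_mul_le_mul_of_le (a := B k j l) (mul_nonneg (hx0 j) (hx0 l)) hprod
  calc (B k k k - rMinus3 B k) * (x k * x k)
      = ∑ j, ∑ l, ((if (j, l) = (k, k) then B k k k * (x k * x k) else 0)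
          - (if (j, l) ≠ (k, k) ∧ B k j l < 0 then |B k j l| else 0) * (x k * x k)) := by
        simp only [Finset.sum_sub_distrib, ← Finset.sum_mul, rMinus3]
        simp [Prod.ext_iff, ite_and, sub_mul]
    _ ≤ ∑ j, ∑ l, B k j l * x j * x l :=
        Finset.sum_le_sum fun j _ => Finset.sum_le_sum fun l _ => hterm j l

end MaxComponent

theorem qcp_max_component_negative_q_general
    (n : ℕ) (B : Fin n → Fin n → Fin n → ℝ) (A : Fin n → Fin n → ℝ)
    (q : Fin n → ℝ)
    (hBdom : ∀ i, rMinus3 B i < B i i i)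
    (hAdom : ∀ i, rMinus2 A i < A i i)
    (hq : ∃ i, q i < 0)
    (x : Fin n → ℝ)
    (hx0 : ∀ i, 0 ≤ x i)
    (hfeas : ∀ i, 0 ≤ (∑ j, ∑ l, B i j l * x j * x l) + (∑ j, A i j * x j) + q i)
    (hcomp : ∑ i, x i * ((∑ j, ∑ l, B i j l * x j * x l) + (∑ j, A i j * x j) + q i) = 0)
    (k : Fin n) (hk : ∀ i, x i ≤ x k) :
    q k < 0 ∧
      (∑ j, ∑ l, B k j l * x j * x l) + (∑ j, A k j * x j) + q k = 0 := by
  have hxk : 0 < x k := by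
    refine (hx0 k).lt_of_ne fun hzero => ?_
    have hx : ∀ i, x i = 0 := fun i => le_antisymm (hzero ▸ hk i) (hx0 i)
    obtain ⟨i, hi⟩ := hq
    have := hfeas i
    simp only [hx, mul_zero, Finset.sum_const_zero, zero_add] at this
    linarith
  have hzero := eq_zero_of_sum_mul_eq_zero hx0 hfeas hcomp hxk
  refine ⟨?_, hzero⟩
  have hB := sub_rMinus3_mul_le_sum_mul B hx0 hk
  have hA := sub_rMinus2_mul_le_sum_mul A hx0 hk
  have hBpos := mul_pos (sub_pos.mpr (hBdom k)) (mul_pos hxk hxk)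
  have hApos := mul_pos (sub_pos.mpr (hAdom k)) hxk
  linarith

/-- for the quadratic complementarity problem with generalized row
strictly diagonally dominant data with positive diagonals and q ∉ ℝ^n_+, any
solution x with ‖x‖_∞ = x_k satisfies q_k < 0 and (Bx² + Ax + q)_k = 0. -/
theorem qcp_max_component_negative_q
    (n : ℕ) (B : Fin n → Fin n → Fin n → ℝ) (A : Fin n → Fin n → ℝ)
    (q : Fin n → ℝ)
    (hBdiag : ∀ i, 0 < B i i i) (hBdom : ∀ i, rMinus3 B i < B i i i)
    (hAdiag : ∀ i, 0 < A i i) (hAdom : ∀ i, rMinus2 A i < A i i)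
    (hq : ∃ i, q i < 0)
    (x : Fin n → ℝ)
    (hx0 : ∀ i, 0 ≤ x i)
    (hfeas : ∀ i, 0 ≤ (∑ j, ∑ l, B i j l * x j * x l) + (∑ j, A i j * x j) + q i)
    (hcomp : ∑ i, x i * ((∑ j, ∑ l, B i j l * x j * x l) + (∑ j, A i j * x j) + q i) = 0)
    (k : Fin n) (hk : ∀ i, x i ≤ x k) :
    q k < 0 ∧
      (∑ j, ∑ l, B k j l * x j * x l) + (∑ j, A k j * x j) + q k = 0 :=
  qcp_max_component_negative_q_general n B A q hBdom hAdom hq x hx0 hfeas hcomp k hk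
end

section
/- Consider the cooperative higher-order Lotka-Volterra system ẋ_i = r_i x_i (1 − a_{ii}x_i + Σ_{j≠i} a_{ij}x_j − b_{iii}x_i² + Σ_{(j,k)≠(i,i)} b_{ijk}x_j x_k) with all parameters nonnegative and A = (a_{ij}) irreducible. If X* > 0 is an equilibrium (so L_i(X*) = 0 for all i) then the Jacobian J at X* satisfies (J X*)_i = −r_i x*_i + r_i x*_i (−b_{iii}(x*_i)² + Σ_{(j,k)≠(i,i)} b_{ijk} x*_j x*_k). In particular, if −b_{iii}(x*_i)² + Σ_{(j,k)≠(i,i)} b_{ijk} x*_j x*_k < 1 for all i, then J X* < 0 componentwise, and since J is an irreducible Metzler matrix, J is Hurwitz, so X* is locally asymptotically stable. -/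
/-!
At an equilibrium `X` with `L(X) = 0` the Jacobian is `J = diag(r X) · ∂L(X)`, so `J X` is read off
from `L(X) = 0`. Cooperativity makes `J` Metzler, and then `J X < 0` says that `X` is a strictly
contracting weight for the norm `max_i |y_i| / X_i`. Spectrally, Gershgorin's theorem applied to
`diag(X)⁻¹ J diag(X)` puts every eigenvalue in the open left half plane. Dynamically, at a
coordinate where `|x_i - X_i| = w X_i` is extremal the Metzler sign pattern gives
`(x_i - X_i) ẋ_i ≤ w² X_i ((J X)_i + O(w) X_i) < 0`, so a trajectory starting in a small box
`|x_i - X_i| < ρ X_i` stays in the shrinking boxes `|x_i - X_i| < ρ e^{-ct/2} X_i`.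
-/

open Filter Topology

/-- Jacobian matrix of the higher-order Lotka-Volterra vector field
F(x)_i = r_i x_i (1 + Σ_j a_{ij} x_j + Σ_{j,k} b_{ijk} x_j x_k). -/
noncomputable def LVJacobian {n : ℕ} (r : Fin n → ℝ) (a : Fin n → Fin n → ℝ)
    (b : Fin n → Fin n → Fin n → ℝ) (x : Fin n → ℝ) :
    Matrix (Fin n) (Fin n) ℝ :=
  Matrix.of fun i j =>
    (if i = j then
        r i * (1 + (∑ l, a i l * x l) + ∑ l, ∑ k, b i l k * x l * x k)
      else 0)
    + r i * x i * (a i j + (∑ k, b i j k * x k) + ∑ k, b i k j * x k)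

open scoped Matrix

theorem forall_neg_of_hasDerivAt_neg_at_first_zero {ι : Type*} [Finite ι] {g g' : ι → ℝ → ℝ}
    (hg : ∀ k t, HasDerivAt (g k) (g' k t) t) (h0 : ∀ k, g k 0 < 0)
    (hzero : ∀ t, 0 < t → (∀ j, g j t ≤ 0) → ∀ k, g k t = 0 → g' k t < 0) :
    ∀ t, 0 ≤ t → ∀ k, g k t < 0 := by
  by_contra! hex
  have hcont : ∀ k, Continuous (g k) := fun k =>
    continuous_iff_continuousAt.2 fun t => (hg k t).continuousAt
  set S := Set.Ici (0 : ℝ) ∩ ⋃ k, {t | 0 ≤ g k t}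
  have hS : IsClosed S :=
    isClosed_Ici.inter (isClosed_iUnion_of_finite fun k => isClosed_le continuous_const (hcont k))
  have hSne : S.Nonempty := by
    obtain ⟨t, ht, k, hk⟩ := hex
    exact ⟨t, ht, Set.mem_iUnion.2 ⟨k, hk⟩⟩
  have hSbdd : BddBelow S := ⟨0, fun t ht => ht.1⟩
  obtain ⟨hT0, hTS⟩ := hS.csInf_mem hSne hSbdd
  obtain ⟨k, hk⟩ := Set.mem_iUnion.1 hTS
  set T := sInf S
  have hbefore : ∀ t ∈ Set.Ico 0 T, ∀ j, g j t < 0 := fun t ht j => by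
    by_contra! hj
    exact (csInf_le hSbdd ⟨ht.1, Set.mem_iUnion.2 ⟨j, hj⟩⟩).not_gt ht.2
  have hTpos : 0 < T := hT0.lt_of_ne fun h => (h0 k).not_ge (h ▸ hk)
  have hT : ∀ j, g j T ≤ 0 := fun j =>
    le_of_tendsto ((hcont j).tendsto T |>.mono_left nhdsWithin_le_nhds) <|
      Filter.eventually_of_mem (Ioo_mem_nhdsLT hTpos) fun t ht => (hbefore t ⟨ht.1.le, ht.2⟩ j).le
  have hkT : g k T = 0 := (hT k).antisymm hk
  have hslope : 0 ≤ g' k T := by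
    refine ge_of_tendsto (hg k T).tendsto_slope_zero_left <|
      Filter.eventually_of_mem (Ioo_mem_nhdsLT (neg_neg_of_pos hTpos)) fun t ht => ?_
    rw [hkT, sub_zero, smul_eq_mul]
    exact mul_nonneg_of_nonpos_of_nonpos (inv_nonpos.2 ht.2.le)
      (hbefore (T + t) ⟨by linarith [ht.1], by linarith [ht.2]⟩ k).le
  exact (hzero T hTpos hT k hkT).not_ge hslope

theorem exists_pos_forall_mul_lt {ι : Type*} [Finite ι] {a b : ι → ℝ} (hb : ∀ i, 0 < b i) :
    ∃ c > 0, ∀ i, c * a i < b i := by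
  have : ∀ᶠ c in 𝓝[>] (0 : ℝ), ∀ i, c * a i < b i :=
    nhdsWithin_le_nhds <| eventually_all.2 fun i =>
      (continuous_mul_const (a i)).continuousAt.eventually_lt continuousAt_const
        (by simpa using hb i)
  obtain ⟨c, hc, hc0⟩ := (this.and self_mem_nhdsWithin).exists
  exact ⟨c, hc0, hc⟩

namespace Matrix

variable {ι : Type*} [Fintype ι]

def IsMetzler (J : Matrix ι ι ℝ) : Prop := ∀ i j, i ≠ j → 0 ≤ J i j

theorem IsMetzler.mul_mulVec_le {J : Matrix ι ι ℝ} (hJ : J.IsMetzler) {X y : ι → ℝ} {w : ℝ}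
    {i : ι} (hy : ∀ j, |y j| ≤ w * X j) (hyi : |y i| = w * X i) :
    y i * (J *ᵥ y) i ≤ w ^ 2 * (X i * (J *ᵥ X) i) := by
  simp only [mulVec, dotProduct, Finset.mul_sum]
  refine Finset.sum_le_sum fun j _ => ?_
  obtain rfl | hij := eq_or_ne i j
  · have : y i * y i = (w * X i) * (w * X i) := by rw [← hyi, abs_mul_abs_self]
    linear_combination J i i * this
  · have hyy : y i * y j ≤ (w * X i) * (w * X j) := calc
        y i * y j ≤ |y i| * |y j| := abs_mul (y i) (y j) ▸ le_abs_self _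
        _ ≤ (w * X i) * (w * X j) := by
          rw [hyi]
          exact mul_le_mul_of_nonneg_left (hy j) (hyi ▸ abs_nonneg _)
    nlinarith [mul_le_mul_of_nonneg_left hyy (hJ i j hij)]

theorem IsMetzler.re_lt_zero_of_mem_spectrum [DecidableEq ι] {J : Matrix ι ι ℝ}
    (hJ : J.IsMetzler) {X : ι → ℝ} (hX : ∀ i, 0 < X i) (hJX : ∀ i, (J *ᵥ X) i < 0) {μ : ℂ}
    (hμ : μ ∈ spectrum ℂ (J.map (Complex.ofReal ·))) : μ.re < 0 := by
  have hX0 : ∀ i, (X i : ℂ) ≠ 0 := fun i => by exact_mod_cast (hX i).ne'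
  let D : (Matrix ι ι ℂ)ˣ :=
    ⟨diagonal fun i => (X i : ℂ), diagonal fun i => (X i : ℂ)⁻¹,
      by simp [diagonal_mul_diagonal, hX0], by simp [diagonal_mul_diagonal, hX0]⟩
  have hentry : ∀ k j,
      ((D⁻¹ : (Matrix ι ι ℂ)ˣ) * J.map (Complex.ofReal ·) * (D : Matrix ι ι ℂ)) k j =
        ↑((X k)⁻¹ * J k j * X j) := fun k j => by
    simp [D, diagonal_mul, mul_diagonal]
  rw [← spectrum.units_conjugate' (u := D), ← spectrum_toLin',
    ← Module.End.hasEigenvalue_iff_mem_spectrum] at hμ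
  obtain ⟨k, hk⟩ := eigenvalue_mem_ball hμ
  simp only [hentry, Metric.mem_closedBall, Complex.dist_eq, Complex.norm_real] at hk
  have hdiag : (X k)⁻¹ * (J k k * X k) = J k k := by field_simp [(hX k).ne']
  have hrow : ∑ j ∈ Finset.univ.erase k, ‖(X k)⁻¹ * J k j * X j‖ =
      (X k)⁻¹ * (J *ᵥ X) k - J k k := by
    rw [mulVec, dotProduct, ← Finset.sum_erase_add _ _ (Finset.mem_univ k), mul_add,
      Finset.mul_sum, hdiag, add_sub_cancel_right]
    refine Finset.sum_congr rfl fun j hj => ?_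
    have := hJ k j (Finset.ne_of_mem_erase hj).symm
    have := hX k
    have := hX j
    rw [Real.norm_of_nonneg (by positivity), mul_assoc]
  rw [hrow, mul_assoc, hdiag] at hk
  calc μ.re = (μ - J k k).re + J k k := by simp
    _ ≤ ‖μ - J k k‖ + J k k := by gcongr; exact Complex.re_le_norm _
    _ ≤ (X k)⁻¹ * (J *ᵥ X) k := by linarith
    _ < 0 := mul_neg_of_pos_of_neg (inv_pos.2 (hX k)) (hJX k)

theorem IsMetzler.sub_mul_le {J : Matrix ι ι ℝ} (hJ : J.IsMetzler) {X u : ι → ℝ} {v w K : ℝ}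
    {i : ι} (hu : ∀ j, |u j - X j| ≤ w * X j) (hui : |u i - X i| = w * X i)
    (hv : |v - (J *ᵥ (u - X)) i| ≤ K * w ^ 2 * X i) :
    (u i - X i) * v ≤ w ^ 2 * X i * ((J *ᵥ X) i + K * w * X i) := by
  have hlin : (u - X) i * (J *ᵥ (u - X)) i ≤ w ^ 2 * (X i * (J *ᵥ X) i) :=
    hJ.mul_mulVec_le (y := u - X) hu hui
  have hrem : (u i - X i) * (v - (J *ᵥ (u - X)) i) ≤ w * X i * (K * w ^ 2 * X i) :=
    (le_abs_self _).trans <| abs_mul (u i - X i) _ ▸ hui ▸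
      mul_le_mul_of_nonneg_left hv (abs_nonneg _)
  simp only [Pi.sub_apply] at hlin
  linear_combination hlin + hrem

theorem IsMetzler.abs_sub_lt_mul_exp_of_hasDerivAt {F : (ι → ℝ) → ι → ℝ} {J : Matrix ι ι ℝ}
    (hJ : J.IsMetzler) {X : ι → ℝ} (hX : ∀ i, 0 < X i) {c K ρ : ℝ}
    (hc : ∀ i, (J *ᵥ X) i ≤ -c * X i) (hρ : 0 < ρ) (hρ1 : ρ ≤ 1) (hKρ : |K| * ρ < c / 2)
    (hF : ∀ u w, w ≤ 1 → (∀ j, |u j - X j| ≤ w * X j) →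
      ∀ i, |F u i - (J *ᵥ (u - X)) i| ≤ K * w ^ 2 * X i)
    {x : ℝ → ι → ℝ} (hx : ∀ t, HasDerivAt x (F (x t)) t) (hx0 : ∀ i, |x 0 i - X i| < ρ * X i) :
    ∀ t, 0 ≤ t → ∀ i, |x t i - X i| < ρ * Real.exp (-(c / 2 * t)) * X i := by
  have hc0 : 0 < c := by linarith [mul_nonneg (abs_nonneg K) hρ.le]
  set β : ℝ → ℝ := fun t => ρ * Real.exp (-(c / 2 * t))
  have hβ : ∀ t, HasDerivAt β (-(c / 2) * β t) t := fun t => by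
    refine (((hasDerivAt_id t).const_mul (c / 2)).neg.exp.const_mul ρ).congr_deriv ?_
    simp only [β, id, Pi.neg_apply]
    ring
  have hβpos : ∀ t, 0 < β t := fun t => by positivity
  have hβX : ∀ t i, |β t * X i| = β t * X i := fun t i => abs_of_pos (mul_pos (hβpos t) (hX i))
  -- Squared gaps rather than `|x t i - X i| - β t * X i`, so that the barriers are differentiable.
  have hneg := forall_neg_of_hasDerivAt_neg_at_first_zero
    (g := fun i t => (x t i - X i) ^ 2 - (β t * X i) ^ 2)
    (g' := fun i t => 2 * (x t i - X i) * F (x t) i + c * (β t * X i) ^ 2)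
    (fun i t => by
      refine ((((hasDerivAt_pi.1 (hx t) i).sub_const (X i)).pow 2).sub
        (((hβ t).mul_const (X i)).pow 2)).congr_deriv ?_
      norm_num
      ring)
    (fun i => by
      simpa [β, sq_lt_sq, abs_of_pos hρ, abs_of_pos (hX i)] using hx0 i)
    (fun t ht hle i hi => by
      have hbox : ∀ j, |x t j - X j| ≤ β t * X j := fun j => by
        rw [← hβX t j]; exact sq_le_sq.1 (sub_nonpos.1 (hle j))
      have hface : |x t i - X i| = β t * X i := by
        rw [← hβX t i]; exact (sq_eq_sq_iff_abs_eq_abs _ _).1 (sub_eq_zero.1 hi)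
      have hβρ : β t ≤ ρ :=
        mul_le_of_le_one_right hρ.le (Real.exp_le_one_iff.2 (by nlinarith))
      have hKβ : K * β t < c / 2 := calc
        K * β t ≤ |K| * β t := mul_le_mul_of_nonneg_right (le_abs_self K) (hβpos t).le
        _ ≤ |K| * ρ := by gcongr
        _ < c / 2 := hKρ
      have hmain := hJ.sub_mul_le hbox hface (hF (x t) (β t) (hβρ.trans hρ1) hbox i)
      have hJX : β t ^ 2 * X i * ((J *ᵥ X) i + K * β t * X i) ≤
          β t ^ 2 * X i * (-c * X i + K * β t * X i) := by
        have := hX i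
        gcongr
        exact hc i
      have hneg : (β t * X i) ^ 2 * (2 * (K * β t) - c) < 0 :=
        mul_neg_of_pos_of_neg (pow_pos (mul_pos (hβpos t) (hX i)) 2) (by linarith)
      linarith)
  intro t ht i
  simpa [sq_lt_sq, hβX, β] using hneg t ht i

theorem IsMetzler.exists_tendsto_of_remainder_le {F : (ι → ℝ) → ι → ℝ} {J : Matrix ι ι ℝ}
    (hJ : J.IsMetzler) {X : ι → ℝ} (hX : ∀ i, 0 < X i) (hJX : ∀ i, (J *ᵥ X) i < 0) {K : ℝ}
    (hF : ∀ u w, w ≤ 1 → (∀ j, |u j - X j| ≤ w * X j) →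
      ∀ i, |F u i - (J *ᵥ (u - X)) i| ≤ K * w ^ 2 * X i) :
    ∃ δ > 0, ∀ x : ℝ → ι → ℝ, (∀ t, HasDerivAt x (F (x t)) t) →
      ‖x 0 - X‖ < δ → Tendsto x atTop (𝓝 X) := by
  obtain ⟨c, hc0, hc⟩ := exists_pos_forall_mul_lt (a := X) fun i => neg_pos.2 (hJX i)
  have : ∀ᶠ ρ in 𝓝[>] (0 : ℝ), ρ ≤ 1 ∧ |K| * ρ < c / 2 :=
    nhdsWithin_le_nhds <| (eventually_le_nhds one_pos).and <|
      (continuous_const_mul |K|).continuousAt.eventually_lt continuousAt_const (by simpa using hc0)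
  obtain ⟨ρ, ⟨hρ1, hKρ⟩, hρ⟩ := (this.and self_mem_nhdsWithin).exists
  obtain ⟨δ, hδ0, hδ⟩ := exists_pos_forall_mul_lt (a := 1) fun i => mul_pos hρ (hX i)
  refine ⟨δ, hδ0, fun x hx hx0 => tendsto_pi_nhds.2 fun i => ?_⟩
  have hdecay := hJ.abs_sub_lt_mul_exp_of_hasDerivAt hX (fun i => by linarith [hc i]) hρ hρ1 hKρ
    hF hx fun i => by simpa using ((norm_le_pi_norm (x 0 - X) i).trans_lt hx0).trans (by simpa using hδ i)
  have hlim : Tendsto (fun t => ρ * Real.exp (-(c / 2 * t)) * X i) atTop (𝓝 0) := by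
    simpa using ((Real.tendsto_exp_neg_atTop_nhds_zero.comp
      (tendsto_id.const_mul_atTop (half_pos hc0))).const_mul ρ).mul_const (X i)
  refine tendsto_iff_norm_sub_tendsto_zero.2 <| squeeze_zero' (.of_forall fun _ => norm_nonneg _)
    ((eventually_ge_atTop 0).mono fun t ht => (hdecay t ht i).le) hlim

end Matrix

theorem abs_sum_mul_le_of_abs_le {ι : Type*} {s : Finset ι} {c y X : ι → ℝ} {w : ℝ}
    (hy : ∀ j, |y j| ≤ w * X j) : |∑ j ∈ s, c j * y j| ≤ w * ∑ j ∈ s, |c j| * X j := by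
  rw [Finset.mul_sum]
  refine (Finset.abs_sum_le_sum_abs _ _).trans (Finset.sum_le_sum fun j _ => ?_)
  rw [abs_mul, mul_left_comm]
  exact mul_le_mul_of_nonneg_left (hy j) (abs_nonneg _)

theorem abs_sum_sum_mul_mul_le_of_abs_le {ι : Type*} {s : Finset ι} {c : ι → ι → ℝ}
    {y X : ι → ℝ} {w : ℝ} (hy : ∀ j, |y j| ≤ w * X j) :
    |∑ j ∈ s, ∑ k ∈ s, c j k * y j * y k| ≤ w ^ 2 * ∑ j ∈ s, ∑ k ∈ s, |c j k| * (X j * X k) := by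
  have hyy : ∀ j k, |y j * y k| ≤ w ^ 2 * (X j * X k) := fun j k => by
    rw [abs_mul]
    nlinarith [mul_le_mul (hy j) (hy k) (abs_nonneg _) ((abs_nonneg _).trans (hy j))]
  simp only [mul_assoc, Finset.mul_sum]
  refine (Finset.abs_sum_le_sum_abs _ _).trans (Finset.sum_le_sum fun j _ => ?_)
  refine (Finset.abs_sum_le_sum_abs _ _).trans (Finset.sum_le_sum fun k _ => ?_)
  rw [abs_mul, mul_left_comm]
  exact mul_le_mul_of_nonneg_left (hyy j k) (abs_nonneg _)

theorem sum_sum_eq_add_sum_sum_ite {ι M : Type*} [Fintype ι] [DecidableEq ι] [AddCommMonoid M]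
    (f : ι → ι → M) (i : ι) :
    ∑ j, ∑ k, f j k = f i i + ∑ j, ∑ k, if (j, k) = (i, i) then 0 else f j k := by
  have hsplit : ∀ j k, f j k =
      (if (j, k) = (i, i) then f j k else 0) + if (j, k) = (i, i) then 0 else f j k :=
    fun j k => by split_ifs <;> simp
  calc ∑ j, ∑ k, f j k
      = ∑ j, ∑ k, ((if (j, k) = (i, i) then f j k else 0) +
          if (j, k) = (i, i) then 0 else f j k) :=
        Finset.sum_congr rfl fun j _ => Finset.sum_congr rfl fun k _ => hsplit j k
    _ = _ := by
        simp only [Finset.sum_add_distrib]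
        congr 1
        simp [Prod.ext_iff, ite_and]

section LotkaVolterra

variable {n : ℕ} (r : Fin n → ℝ) (a : Fin n → Fin n → ℝ) (b : Fin n → Fin n → Fin n → ℝ)

-- The paper's `L_i`, with its self-limiting coefficients `-a_{ii}`, `-b_{iii}` stored as
-- `a i i`, `b i i i`.
def lvRate (x : Fin n → ℝ) (i : Fin n) : ℝ :=
  1 + (∑ j, a i j * x j) + ∑ j, ∑ k, b i j k * x j * x k

def lvField (x : Fin n → ℝ) : Fin n → ℝ := fun i => r i * x i * lvRate a b x i

def lvRateDeriv (x : Fin n → ℝ) (i j : Fin n) : ℝ :=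
  a i j + (∑ k, b i j k * x k) + ∑ k, b i k j * x k

theorem sum_lvRateDeriv_mul (x v : Fin n → ℝ) (i : Fin n) :
    ∑ j, lvRateDeriv a b x i j * v j =
      (∑ j, a i j * v j) + (∑ j, ∑ k, b i j k * v j * x k) + ∑ j, ∑ k, b i j k * x j * v k := by
  simp only [lvRateDeriv, add_mul, Finset.sum_add_distrib, Finset.sum_mul]
  rw [Finset.sum_comm (f := fun j k => b i k j * x k * v j)]
  congr 2
  exact Finset.sum_congr rfl fun _ _ => Finset.sum_congr rfl fun _ _ => by ring

theorem lvRate_eq_add (x u : Fin n → ℝ) (i : Fin n) :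
    lvRate a b u i = lvRate a b x i + ∑ j, lvRateDeriv a b x i j * (u j - x j) +
      ∑ j, ∑ k, b i j k * (u j - x j) * (u k - x k) := by
  have ha : ∑ j, a i j * u j = ∑ j, a i j * x j + ∑ j, a i j * (u j - x j) := by
    rw [← Finset.sum_add_distrib]
    exact Finset.sum_congr rfl fun j _ => by ring
  have hb : ∑ j, ∑ k, b i j k * u j * u k = ∑ j, ∑ k, b i j k * x j * x k +
      ∑ j, ∑ k, b i j k * (u j - x j) * x k + ∑ j, ∑ k, b i j k * x j * (u k - x k) +
      ∑ j, ∑ k, b i j k * (u j - x j) * (u k - x k) := by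
    simp only [← Finset.sum_add_distrib]
    exact Finset.sum_congr rfl fun j _ => Finset.sum_congr rfl fun k _ => by ring
  rw [sum_lvRateDeriv_mul, lvRate, lvRate, ha, hb]
  ring

theorem LVJacobian_mulVec_apply (x v : Fin n → ℝ) (i : Fin n) :
    (LVJacobian r a b x *ᵥ v) i =
      r i * lvRate a b x i * v i + r i * x i * ∑ j, lvRateDeriv a b x i j * v j := by
  simp only [Matrix.mulVec, dotProduct, LVJacobian, Matrix.of_apply, add_mul, ite_mul, zero_mul,
    Finset.sum_add_distrib, Finset.sum_ite_eq, Finset.mem_univ, if_true, Finset.mul_sum]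
  exact congrArg _ (Finset.sum_congr rfl fun j _ => by rw [lvRateDeriv]; ring)

theorem LVJacobian_mulVec_self {x : Fin n → ℝ} {i : Fin n} (hx : lvRate a b x i = 0) :
    (LVJacobian r a b x *ᵥ x) i = r i * x i * ((∑ j, ∑ k, b i j k * x j * x k) - 1) := by
  rw [LVJacobian_mulVec_apply, hx, sum_lvRateDeriv_mul]
  rw [lvRate] at hx
  linear_combination r i * x i * hx

theorem isMetzler_LVJacobian {r : Fin n → ℝ} {a : Fin n → Fin n → ℝ}
    {b : Fin n → Fin n → Fin n → ℝ} {x : Fin n → ℝ} (hr : ∀ i, 0 ≤ r i)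
    (ha : ∀ i j, i ≠ j → 0 ≤ a i j) (hb : ∀ i j k, (j, k) ≠ (i, i) → 0 ≤ b i j k)
    (hx : ∀ i, 0 ≤ x i) : (LVJacobian r a b x).IsMetzler := fun i j hij => by
  have hb₁ : ∀ k, 0 ≤ b i j k := fun k => hb i j k fun h => hij (congrArg Prod.fst h).symm
  have hb₂ : ∀ k, 0 ≤ b i k j := fun k => hb i k j fun h => hij (congrArg Prod.snd h).symm
  have := ha i j hij
  have := hr i
  have := hx i
  simp only [LVJacobian, Matrix.of_apply, if_neg hij, zero_add]
  have := Finset.sum_nonneg fun k (_ : k ∈ Finset.univ) => mul_nonneg (hb₁ k) (hx k)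
  have := Finset.sum_nonneg fun k (_ : k ∈ Finset.univ) => mul_nonneg (hb₂ k) (hx k)
  positivity

theorem lvField_sub_LVJacobian_mulVec {x : Fin n → ℝ} {i : Fin n} (hx : lvRate a b x i = 0)
    (u : Fin n → ℝ) :
    lvField r a b u i - (LVJacobian r a b x *ᵥ (u - x)) i =
      r i * ((u i - x i) * ∑ j, lvRateDeriv a b x i j * (u j - x j) +
        u i * ∑ j, ∑ k, b i j k * (u j - x j) * (u k - x k)) := by
  rw [lvField, lvRate_eq_add a b x u i, LVJacobian_mulVec_apply, hx]
  simp only [Pi.sub_apply]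
  ring

theorem exists_abs_lvField_sub_LVJacobian_mulVec_le {x : Fin n → ℝ} (hx : ∀ i, 0 ≤ x i)
    (heq : ∀ i, lvRate a b x i = 0) :
    ∃ K, ∀ u w, w ≤ 1 → (∀ j, |u j - x j| ≤ w * x j) →
      ∀ i, |lvField r a b u i - (LVJacobian r a b x *ᵥ (u - x)) i| ≤ K * w ^ 2 * x i := by
  set Kr : Fin n → ℝ := fun i => |r i| *
    (∑ j, |lvRateDeriv a b x i j| * x j + 2 * ∑ j, ∑ k, |b i j k| * (x j * x k))
  have hKr : ∀ i, 0 ≤ Kr i := fun i => by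
    have := Finset.sum_nonneg fun j (_ : j ∈ Finset.univ) =>
      mul_nonneg (abs_nonneg (lvRateDeriv a b x i j)) (hx j)
    have := Finset.sum_nonneg fun j (_ : j ∈ Finset.univ) => Finset.sum_nonneg
      fun k (_ : k ∈ Finset.univ) => mul_nonneg (abs_nonneg (b i j k)) (mul_nonneg (hx j) (hx k))
    positivity
  refine ⟨∑ i, Kr i, fun u w hw hu i => ?_⟩
  have hlin := abs_sum_mul_le_of_abs_le (s := Finset.univ) (c := lvRateDeriv a b x i) hu
  have hquad := abs_sum_sum_mul_mul_le_of_abs_le (s := Finset.univ) (c := b i) hu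
  have hui : |u i| ≤ 2 * x i := calc
    |u i| = |x i + (u i - x i)| := by ring_nf
    _ ≤ |x i| + |u i - x i| := abs_add_le (x i) _
    _ ≤ x i + 1 * x i := by
        rw [abs_of_nonneg (hx i)]
        gcongr
        exact (hu i).trans (by gcongr; exact hx i)
    _ = 2 * x i := by ring
  rw [lvField_sub_LVJacobian_mulVec r a b (heq i)]
  calc _ ≤ |r i| * (|u i - x i| * |∑ j, lvRateDeriv a b x i j * (u j - x j)| +
        |u i| * |∑ j, ∑ k, b i j k * (u j - x j) * (u k - x k)|) := by
        rw [abs_mul]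
        gcongr
        exact (abs_add_le _ _).trans_eq (by rw [abs_mul, abs_mul])
    _ ≤ |r i| * ((w * x i) * (w * ∑ j, |lvRateDeriv a b x i j| * x j) +
        (2 * x i) * (w ^ 2 * ∑ j, ∑ k, |b i j k| * (x j * x k))) := by
        have := hx i
        have hwx : 0 ≤ w * x i := (abs_nonneg _).trans (hu i)
        gcongr
        exact hu i
    _ = Kr i * w ^ 2 * x i := by ring
    _ ≤ (∑ i, Kr i) * w ^ 2 * x i := by
        have := hx i
        gcongr
        exact Finset.single_le_sum (fun j _ => hKr j) (Finset.mem_univ i)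

end LotkaVolterra

theorem higher_order_LV_cooperative_positive_equilibrium_stable_general
    (n : ℕ) (r : Fin n → ℝ) (a : Fin n → Fin n → ℝ)
    (b : Fin n → Fin n → Fin n → ℝ)
    (hr : ∀ i, 0 < r i)
    (haMetzler : ∀ i j, i ≠ j → 0 ≤ a i j)
    (hbMetzler : ∀ i j k, (j, k) ≠ (i, i) → 0 ≤ b i j k)
    (X : Fin n → ℝ) (hX : ∀ i, 0 < X i)
    (heq : ∀ i, 1 + (∑ j, a i j * X j) + (∑ j, ∑ k, b i j k * X j * X k) = 0) :
    (∀ i, (LVJacobian r a b X).mulVec X i =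
      -(r i * X i) + r i * X i * (b i i i * X i ^ 2 +
        ∑ j, ∑ k, if (j, k) = (i, i) then 0 else b i j k * X j * X k)) ∧
    ((∀ i, b i i i * X i ^ 2 +
        (∑ j, ∑ k, if (j, k) = (i, i) then 0 else b i j k * X j * X k) < 1) →
      (∀ i, (LVJacobian r a b X).mulVec X i < 0) ∧
      (∀ μ ∈ spectrum ℂ ((LVJacobian r a b X).map (Complex.ofReal ·)), μ.re < 0) ∧
      ∃ δ > (0 : ℝ), ∀ x : ℝ → Fin n → ℝ,
        (∀ t, HasDerivAt x
          (fun i => r i * x t i * (1 + (∑ j, a i j * x t j) +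
            ∑ j, ∑ k, b i j k * x t j * x t k)) t) →
        ‖x 0 - X‖ < δ → Tendsto x atTop (𝓝 X)) := by
  have hJX : ∀ i, (LVJacobian r a b X *ᵥ X) i = -(r i * X i) + r i * X i * (b i i i * X i ^ 2 +
      ∑ j, ∑ k, if (j, k) = (i, i) then 0 else b i j k * X j * X k) := fun i => by
    rw [LVJacobian_mulVec_self r a b (heq i), sum_sum_eq_add_sum_sum_ite _ i]
    ring
  refine ⟨hJX, fun hlt => ?_⟩
  have hneg : ∀ i, (LVJacobian r a b X *ᵥ X) i < 0 := fun i => by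
    rw [hJX i]
    nlinarith [mul_pos (hr i) (hX i), hlt i]
  have hJ := isMetzler_LVJacobian (fun i => (hr i).le) haMetzler hbMetzler fun i => (hX i).le
  obtain ⟨K, hK⟩ := exists_abs_lvField_sub_LVJacobian_mulVec_le r a b (fun i => (hX i).le) heq
  exact ⟨hneg, fun μ => hJ.re_lt_zero_of_mem_spectrum hX hneg,
    hJ.exists_tendsto_of_remainder_le hX hneg hK⟩

/-- at a positive equilibrium X* of the cooperative higher-order
Lotka-Volterra system, (J X*)_i = -r_i x*_i + r_i x*_i (b_{iii} x*_i² +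
Σ_{(j,k)≠(i,i)} b_{ijk} x*_j x*_k); if b_{iii} x*_i² + Σ_{(j,k)≠(i,i)} b_{ijk}
x*_j x*_k < 1 for all i, then J X* < 0, J is Hurwitz (being irreducible
Metzler), and X* is locally asymptotically stable. -/
theorem higher_order_LV_cooperative_positive_equilibrium_stable
    (n : ℕ) (r : Fin n → ℝ) (a : Fin n → Fin n → ℝ)
    (b : Fin n → Fin n → Fin n → ℝ)
    (hr : ∀ i, 0 < r i)
    (haMetzler : ∀ i j, i ≠ j → 0 ≤ a i j)
    (haIrr : ∀ S : Set (Fin n), S.Nonempty → S ≠ Set.univ →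
      ∃ i ∈ S, ∃ j ∉ S, a i j ≠ 0)
    (hbMetzler : ∀ i j k, (j, k) ≠ (i, i) → 0 ≤ b i j k)
    (X : Fin n → ℝ) (hX : ∀ i, 0 < X i)
    (heq : ∀ i, 1 + (∑ j, a i j * X j) + (∑ j, ∑ k, b i j k * X j * X k) = 0) :
    (∀ i, (LVJacobian r a b X).mulVec X i =
      -(r i * X i) + r i * X i * (b i i i * X i ^ 2 +
        ∑ j, ∑ k, if (j, k) = (i, i) then 0 else b i j k * X j * X k)) ∧
    ((∀ i, b i i i * X i ^ 2 +
        (∑ j, ∑ k, if (j, k) = (i, i) then 0 else b i j k * X j * X k) < 1) →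
      (∀ i, (LVJacobian r a b X).mulVec X i < 0) ∧
      (∀ μ ∈ spectrum ℂ ((LVJacobian r a b X).map (Complex.ofReal ·)), μ.re < 0) ∧
      ∃ δ > (0 : ℝ), ∀ x : ℝ → Fin n → ℝ,
        (∀ t, HasDerivAt x
          (fun i => r i * x t i * (1 + (∑ j, a i j * x t j) +
            ∑ j, ∑ k, b i j k * x t j * x t k)) t) →
        ‖x 0 - X‖ < δ → Tendsto x atTop (𝓝 X)) :=
  higher_order_LV_cooperative_positive_equilibrium_stable_general n r a b hr haMetzler hbMetzler X
    hX heq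
end

section
/- Consider the cooperative higher-order Lotka-Volterra system with nonnegative interaction parameters and irreducible A. Any boundary equilibrium of the form (X*_m, 0_{n−m}) with X*_m > 0 and 0 < m < n is unstable: the Jacobian at such a point is block upper triangular with lower-right diagonal block D whose entries D_i = r_i (1 + Σ_{j∈S} a_{ij} x*_j + Σ_{j,k∈S} b_{ijk} x*_j x*_k) are strictly positive (S being the set of surviving species), so the Jacobian has a positive eigenvalue. -/
theorem Matrix.apply_self_mem_spectrum_of_row_offDiag_eq_zero {ι R : Type*} [Fintype ι]
    [DecidableEq ι] [CommRing R] [Nontrivial R] (M : Matrix ι ι R) (i : ι)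
    (hrow : ∀ j, j ≠ i → M i j = 0) : M i i ∈ spectrum R M := by
  rw [spectrum.mem_iff, Matrix.isUnit_iff_isUnit_det]
  have hdet : (algebraMap R (Matrix ι ι R) (M i i) - M).det = 0 := by
    refine Matrix.det_eq_zero_of_row_eq_zero i fun j => ?_
    rcases eq_or_ne j i with rfl | hji
    · simp [Matrix.algebraMap_eq_diagonal]
    · simp [Matrix.algebraMap_eq_diagonal, Matrix.diagonal_apply_ne' _ hji, hrow j hji]
  rw [hdet]
  exact not_isUnit_zero

section LVJacobian

variable {n : ℕ} (r : Fin n → ℝ) (a : Fin n → Fin n → ℝ) (b : Fin n → Fin n → Fin n → ℝ)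
  {x : Fin n → ℝ} {i : Fin n}

theorem LVJacobian_apply_self_of_eq_zero (hxi : x i = 0) :
    LVJacobian r a b x i i =
      r i * (1 + (∑ j, a i j * x j) + ∑ j, ∑ k, b i j k * x j * x k) := by
  simp [LVJacobian, hxi]

theorem LVJacobian_apply_of_ne_of_eq_zero (hxi : x i = 0) {j : Fin n} (hji : j ≠ i) :
    LVJacobian r a b x i j = 0 := by
  simp [LVJacobian, hxi, hji.symm]

variable {r a b}

theorem lv_growth_rate_pos_of_eq_zero (hx : 0 ≤ x) (hxi : x i = 0)
    (ha : ∀ j, i ≠ j → 0 ≤ a i j) (hb : ∀ j k, (j, k) ≠ (i, i) → 0 ≤ b i j k) :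
    0 < 1 + (∑ j, a i j * x j) + ∑ j, ∑ k, b i j k * x j * x k := by
  have hlin : 0 ≤ ∑ j, a i j * x j := Finset.sum_nonneg fun j _ => by
    rcases eq_or_ne i j with rfl | hij
    · simp [hxi]
    · exact mul_nonneg (ha j hij) (hx j)
  have hquad : 0 ≤ ∑ j, ∑ k, b i j k * x j * x k :=
    Finset.sum_nonneg fun j _ => Finset.sum_nonneg fun k _ => by
      rcases eq_or_ne j i with rfl | hji
      · simp [hxi]
      · exact mul_nonneg (mul_nonneg (hb j k (by simp [hji])) (hx j)) (hx k)
  linarith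

end LVJacobian

theorem higher_order_LV_cooperative_boundary_equilibrium_unstable_general
    (n : ℕ) (r : Fin n → ℝ) (a : Fin n → Fin n → ℝ)
    (b : Fin n → Fin n → Fin n → ℝ)
    (hr : ∀ i, 0 < r i)
    (haMetzler : ∀ i j, i ≠ j → 0 ≤ a i j)
    (hbMetzler : ∀ i j k, (j, k) ≠ (i, i) → 0 ≤ b i j k)
    (S : Finset (Fin n)) (hSproper : S ≠ Finset.univ)
    (z : Fin n → ℝ)
    (hzpos : ∀ i ∈ S, 0 < z i) (hzzero : ∀ i ∉ S, z i = 0) :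
    (∀ i ∉ S,
      LVJacobian r a b z i i =
        r i * (1 + (∑ j, a i j * z j) + (∑ j, ∑ k, b i j k * z j * z k)) ∧
      0 < LVJacobian r a b z i i) ∧
    ∃ μ ∈ spectrum ℂ ((LVJacobian r a b z).map (Complex.ofReal ·)), 0 < μ.re := by
  have hz : 0 ≤ z := fun j => by
    by_cases hj : j ∈ S
    exacts [(hzpos j hj).le, (hzzero j hj).ge]
  have hdiag : ∀ i ∉ S, LVJacobian r a b z i i =
      r i * (1 + (∑ j, a i j * z j) + (∑ j, ∑ k, b i j k * z j * z k)) ∧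
      0 < LVJacobian r a b z i i := fun i hi => by
    rw [LVJacobian_apply_self_of_eq_zero r a b (hzzero i hi)]
    exact ⟨rfl, mul_pos (hr i) <|
      lv_growth_rate_pos_of_eq_zero hz (hzzero i hi) (haMetzler i) (hbMetzler i)⟩
  refine ⟨hdiag, ?_⟩
  obtain ⟨i, hi⟩ : ∃ i, i ∉ S := by simpa [Finset.eq_univ_iff_forall] using hSproper
  refine ⟨_, Matrix.apply_self_mem_spectrum_of_row_offDiag_eq_zero _ i fun j hji => ?_, ?_⟩
  · simp [LVJacobian_apply_of_ne_of_eq_zero r a b (hzzero i hi) hji]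
  · simpa using (hdiag i hi).2

/-- any boundary equilibrium of the cooperative higher-order
Lotka-Volterra system (with a nonempty proper set S of surviving species) is
unstable: the diagonal entries of the Jacobian corresponding to extinct species
are strictly positive, and the Jacobian has an eigenvalue with positive real
part. -/
theorem higher_order_LV_cooperative_boundary_equilibrium_unstable
    (n : ℕ) (r : Fin n → ℝ) (a : Fin n → Fin n → ℝ)
    (b : Fin n → Fin n → Fin n → ℝ)
    (hr : ∀ i, 0 < r i)
    (haMetzler : ∀ i j, i ≠ j → 0 ≤ a i j)
    (haIrr : ∀ S : Set (Fin n), S.Nonempty → S ≠ Set.univ →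
      ∃ i ∈ S, ∃ j ∉ S, a i j ≠ 0)
    (hbMetzler : ∀ i j k, (j, k) ≠ (i, i) → 0 ≤ b i j k)
    (S : Finset (Fin n)) (hSne : S.Nonempty) (hSproper : S ≠ Finset.univ)
    (z : Fin n → ℝ)
    (hzpos : ∀ i ∈ S, 0 < z i) (hzzero : ∀ i ∉ S, z i = 0)
    (heq : ∀ i ∈ S,
      1 + (∑ j, a i j * z j) + (∑ j, ∑ k, b i j k * z j * z k) = 0) :
    (∀ i ∉ S,
      LVJacobian r a b z i i =
        r i * (1 + (∑ j, a i j * z j) + (∑ j, ∑ k, b i j k * z j * z k)) ∧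
      0 < LVJacobian r a b z i i) ∧
    ∃ μ ∈ spectrum ℂ ((LVJacobian r a b z).map (Complex.ofReal ·)), 0 < μ.re :=
  higher_order_LV_cooperative_boundary_equilibrium_unstable_general n r a b hr haMetzler hbMetzler S
    hSproper z hzpos hzzero
end
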